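/- Let n, m and m' be nonnegative integers such that n+m and n+m' are both even and m ≥ m'. Then the partisan chocolate game position PC(n,m) is greater than or equal to PC(n,m') in the normal-play game order (i.e., PC(n,m) − PC(n,m') is a second-player win or a win for Left). -/

import Mathlib

universe u

namespace SetTheory

/-- Pre-games (removed from Mathlib; restored here with their Dec 2024 meaning). -/
inductive PGame : Type (u + 1)
  | mk : ∀ α β : Type u, (α → PGame) → (β → PGame) → PGame

namespace PGame

/-- Simultaneous definition of `≤` (first component) and `⧏` (second component),
as in the older Mathlib. -/
noncomputable def leLF (x : PGame.{u}) : PGame.{u} → Prop × Prop :=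
  PGame.rec (motive := fun _ => PGame.{u} → Prop × Prop)
    (fun xl xr xL xR IHl IHr y =>
      PGame.rec (motive := fun _ => Prop × Prop)
        (fun yl yr yL yR JHl JHr =>
          ((∀ i, (IHl i (mk yl yr yL yR)).2) ∧ ∀ j, (JHr j).2,
            (∃ i, (JHl i).1) ∨ ∃ j, (IHr j (mk yl yr yL yR)).1)) y) x

noncomputable instance : LE PGame.{u} :=
  ⟨fun x y => (leLF x y).1⟩

end PGame

end SetTheory

open SetTheory

/-- The partisan chocolate game position `PC n m`.
Left options: `PC n' m` with `n' < n` and `n' + m` even, and `PC n m'` with `m' < m` and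
`n + m'` even. Right options: the same with "odd" in place of "even". -/
def PC : ℕ → ℕ → SetTheory.PGame
  | n, m =>
    SetTheory.PGame.mk
      {p : ℕ × ℕ // (p.2 = m ∧ p.1 < n ∧ Even (p.1 + m)) ∨ (p.1 = n ∧ p.2 < m ∧ Even (n + p.2))}
      {p : ℕ × ℕ // (p.2 = m ∧ p.1 < n ∧ Odd (p.1 + m)) ∨ (p.1 = n ∧ p.2 < m ∧ Odd (n + p.2))}
      (fun p => PC p.1.1 p.1.2)
      (fun p => PC p.1.1 p.1.2)
termination_by n m => n + m
decreasing_by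
  all_goals rcases p.2 with ⟨h1, h2, -⟩ | ⟨h1, h2, -⟩ <;> omega

/-
Positions of even and of odd total size behave very differently. Among the even ones,
`PC a b ≤ PC c d` exactly when `a + b - 2 (a % 2) ≤ c + d - 2 (c % 2)`; among the odd ones, exactly
when `c + d ≤ a + b`; every even position lies below every odd one, never the other way round.
This description satisfies the same recursion as `≤` on the positions (in each failing case a
move of one or two squares witnesses it), so the two agree by well-founded induction on the
total size.
-/
namespace SetTheory.PGame

def LF (x y : PGame.{u}) : Prop := (leLF x y).2

theorem mk_le_mk {xl xr : Type u} {xL : xl → PGame.{u}} {xR : xr → PGame.{u}}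
    {yl yr : Type u} {yL : yl → PGame.{u}} {yR : yr → PGame.{u}} :
    mk xl xr xL xR ≤ mk yl yr yL yR ↔
      (∀ i, LF (xL i) (mk yl yr yL yR)) ∧ ∀ j, LF (mk xl xr xL xR) (yR j) := Iff.rfl

theorem mk_lf_mk {xl xr : Type u} {xL : xl → PGame.{u}} {xR : xr → PGame.{u}}
    {yl yr : Type u} {yL : yl → PGame.{u}} {yR : yr → PGame.{u}} :
    LF (mk xl xr xL xR) (mk yl yr yL yR) ↔
      (∃ i, mk xl xr xL xR ≤ yL i) ∨ ∃ j, xR j ≤ mk yl yr yL yR := Iff.rfl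

theorem not_le_and_not_le (x y : PGame.{u}) : (¬ x ≤ y ↔ LF y x) ∧ (¬ y ≤ x ↔ LF x y) := by
  induction x generalizing y with
  | mk xl xr xL xR IHl IHr =>
    induction y with
    | mk yl yr yL yR JHl JHr =>
      have h1 : ∀ i, ¬ LF (xL i) (mk yl yr yL yR) ↔ mk yl yr yL yR ≤ xL i := fun i => by
        rw [← (IHl i _).2, not_not]
      have h2 : ∀ j, ¬ LF (mk xl xr xL xR) (yR j) ↔ yR j ≤ mk xl xr xL xR := fun j => by
        rw [← (JHr j).2, not_not]
      have h3 : ∀ i, ¬ LF (yL i) (mk xl xr xL xR) ↔ mk xl xr xL xR ≤ yL i := fun i => by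
        rw [← (JHl i).1, not_not]
      have h4 : ∀ j, ¬ LF (mk yl yr yL yR) (xR j) ↔ xR j ≤ mk yl yr yL yR := fun j => by
        rw [← (IHr j _).1, not_not]
      rw [mk_le_mk, mk_le_mk, mk_lf_mk, mk_lf_mk]
      simp only [not_and_or, not_forall, h1, h2, h3, h4, and_self]

theorem not_le {x y : PGame.{u}} : ¬ x ≤ y ↔ LF y x := (not_le_and_not_le x y).1

theorem mk_le_mk_iff_forall_not_le {xl xr : Type u} {xL : xl → PGame.{u}} {xR : xr → PGame.{u}}
    {yl yr : Type u} {yL : yl → PGame.{u}} {yR : yr → PGame.{u}} :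
    mk xl xr xL xR ≤ mk yl yr yL yR ↔
      (∀ i, ¬ mk yl yr yL yR ≤ xL i) ∧ ∀ j, ¬ yR j ≤ mk xl xr xL xR := by
  simp only [mk_le_mk, not_le]

end SetTheory.PGame

def PCLeftMove (a b x y : ℕ) : Prop :=
  (y = b ∧ x < a ∧ Even (x + b)) ∨ (x = a ∧ y < b ∧ Even (a + y))

def PCRightMove (a b x y : ℕ) : Prop :=
  (y = b ∧ x < a ∧ Odd (x + b)) ∨ (x = a ∧ y < b ∧ Odd (a + y))

theorem PC_le_PC_iff (a b c d : ℕ) :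
    PC a b ≤ PC c d ↔
      (∀ x y, PCLeftMove a b x y → ¬ PC c d ≤ PC x y) ∧
        ∀ x y, PCRightMove c d x y → ¬ PC x y ≤ PC a b := by
  rw [PC, PC, PGame.mk_le_mk_iff_forall_not_le, ← PC, ← PC]
  exact and_congr ⟨fun h x y hxy => h ⟨(x, y), hxy⟩, fun h i => h _ _ i.2⟩
    ⟨fun h x y hxy => h ⟨(x, y), hxy⟩, fun h j => h _ _ j.2⟩

-- The even case compares the keys `a + b - 2 (a % 2)` and `c + d - 2 (c % 2)`, rearranged to avoid
-- truncated subtraction.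
def PCLe (a b c d : ℕ) : Prop :=
  ((a + b) % 2 = 0 → (c + d) % 2 = 0 → a + b + 2 * (c % 2) ≤ c + d + 2 * (a % 2)) ∧
    ((a + b) % 2 = 1 → (c + d) % 2 = 1 ∧ c + d ≤ a + b)

theorem PCLe.not_of_leftMove {a b c d x y : ℕ} (h : PCLe a b c d) (hxy : PCLeftMove a b x y) :
    ¬ PCLe c d x y := by
  simp only [PCLe, PCLeftMove, Nat.even_iff] at *
  omega

theorem PCLe.not_of_rightMove {a b c d x y : ℕ} (h : PCLe a b c d) (hxy : PCRightMove c d x y) :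
    ¬ PCLe x y a b := by
  simp only [PCLe, PCRightMove, Nat.odd_iff] at *
  omega

theorem pcLe_of_forall_not {a b c d : ℕ}
    (hL : ∀ x y, PCLeftMove a b x y → ¬ PCLe c d x y)
    (hR : ∀ x y, PCRightMove c d x y → ¬ PCLe x y a b) : PCLe a b c d := by
  simp only [PCLe, PCLeftMove, PCRightMove, Nat.even_iff, Nat.odd_iff] at *
  refine ⟨fun hs ht => ?_, fun hs => ?_⟩
  · by_contra hlt
    -- remove two squares from a coordinate of `(a, b)`: the key drops by exactly two
    rcases (by omega : 2 ≤ a ∨ 2 ≤ b) with ha | hb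
    · exact hL (a - 2) b (.inl ⟨rfl, by omega, by omega⟩) (by omega)
    · exact hL a (b - 2) (.inr ⟨rfl, by omega, by omega⟩) (by omega)
  · -- Left removes one square from the odd coordinate of `(a, b)`, reaching key `a + b - 1`
    have hkey : (c + d) % 2 = 0 → a + b + 2 * (c % 2) < c + d := by
      rcases Nat.mod_two_eq_zero_or_one a with ha | ha
      · exact fun ht => by have := hL a (b - 1) (.inr ⟨rfl, by omega, by omega⟩); omega
      · exact fun ht => by have := hL (a - 1) b (.inl ⟨rfl, by omega, by omega⟩); omega
    have ht : (c + d) % 2 = 1 := by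
      by_contra ht
      rcases (by omega : 1 ≤ c ∨ 1 ≤ d) with hc | hd
      · exact hR (c - 1) d (.inl ⟨rfl, by omega, by omega⟩) (by omega)
      · exact hR c (d - 1) (.inr ⟨rfl, by omega, by omega⟩) (by omega)
    refine ⟨ht, ?_⟩
    by_contra hlt
    rcases (by omega : 2 ≤ c ∨ 2 ≤ d) with hc | hd
    · exact hR (c - 2) d (.inl ⟨rfl, by omega, by omega⟩) (by omega)
    · exact hR c (d - 2) (.inr ⟨rfl, by omega, by omega⟩) (by omega)

theorem pcLe_iff (a b c d : ℕ) :
    PCLe a b c d ↔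
      (∀ x y, PCLeftMove a b x y → ¬ PCLe c d x y) ∧
        ∀ x y, PCRightMove c d x y → ¬ PCLe x y a b :=
  ⟨fun h => ⟨fun _ _ => h.not_of_leftMove, fun _ _ => h.not_of_rightMove⟩,
    fun h => pcLe_of_forall_not h.1 h.2⟩

theorem PC_le_PC_iff_pcLe (a b c d : ℕ) : PC a b ≤ PC c d ↔ PCLe a b c d := by
  rw [PC_le_PC_iff, pcLe_iff]
  exact and_congr
    (forall₂_congr fun x y => forall_congr' fun hxy => not_congr (PC_le_PC_iff_pcLe c d x y))
    (forall₂_congr fun x y => forall_congr' fun hxy => not_congr (PC_le_PC_iff_pcLe x y a b))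
termination_by a + b + c + d
decreasing_by
  all_goals (simp only [PCLeftMove, PCRightMove] at hxy; omega)

theorem stmt_0 (n m m' : ℕ) (hm : Even (n + m)) (hm' : Even (n + m')) (h : m' ≤ m) :
    PC n m' ≤ PC n m := by
  rw [PC_le_PC_iff_pcLe, PCLe]
  rw [Nat.even_iff] at hm hm'
  constructor <;> omega
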